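/- Clock of the Scott sequence: let θ = λabc.bc(aabc) and S = λxyz.xz(yz), I = λx.x. For every m ≥ 0 and variable x, the term θ θ S^m I x head-reduces in exactly 3m+4 steps to x (θ θ S^m I x), where θ θ S^m denotes θθ applied to m copies of S. -/
import Mathlib


/-- Untyped λ-terms in de Bruijn notation. -/
inductive Lam : Type
  | var : Nat → Lam
  | app : Lam → Lam → Lam
  | lam : Lam → Lam
  deriving DecidableEq

namespace Lam

/-- Lift (shift) free variables ≥ `d` by one. -/
def lift (d : Nat) : Lam → Lam
  | var n => if n < d then var n else var (n + 1)
  | app s t => app (lift d s) (lift d t)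
  | lam t => lam (lift (d + 1) t)

/-- Capture-avoiding substitution of `u` for the variable with index `k`. -/
def subst (k : Nat) (u : Lam) : Lam → Lam
  | var n => if n = k then u else if k < n then var (n - 1) else var n
  | app s t => app (subst k u s) (subst k u t)
  | lam t => lam (subst (k + 1) (lift 0 u) t)

/-- One-step β-reduction `→β` (compatible closure of the β-rule). -/
inductive Step : Lam → Lam → Prop
  | beta (t u : Lam) : Step (app (lam t) u) (subst 0 u t)
  | appL {s s' : Lam} (t : Lam) : Step s s' → Step (app s t) (app s' t)
  | appR (s : Lam) {t t' : Lam} : Step t t' → Step (app s t) (app s t')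
  | lam {t t' : Lam} : Step t t' → Step (lam t) (lam t')

/-- Many-step β-reduction `↠β`. -/
def Red : Lam → Lam → Prop := Relation.ReflTransGen Step

/-- β-convertibility `=β`. -/
def Conv : Lam → Lam → Prop := Relation.EqvGen Step

/-- `Y` is a fixed point combinator: `Y x =β x (Y x)` for a fresh variable `x`. -/
def isFPC (Y : Lam) : Prop :=
  Conv (app (lift 0 Y) (var 0)) (app (var 0) (app (lift 0 Y) (var 0)))

/-- `M P^n`: `M` applied to `n` copies of `P`. -/
def appIter (M P : Lam) : Nat → Lam
  | 0 => M
  | n + 1 => appIter (app M P) P n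

/-- `I = λx.x` -/
def K_I : Lam := lam (var 0)

/-- `S = λxyz.xz(yz)` -/
def K_S : Lam := lam (lam (lam (app (app (var 2) (var 0)) (app (var 1) (var 0)))))

/-- `B = λxyz.x(yz)` -/
def K_B : Lam := lam (lam (lam (app (var 2) (app (var 1) (var 0)))))

/-- `δ = λab.b(ab)` -/
def K_delta : Lam := lam (lam (app (var 0) (app (var 1) (var 0))))

/-- `ω_f = λx.f(xx)` (with `f` the variable bound just outside). -/
def K_omega : Lam := lam (app (var 1) (app (var 0) (var 0)))

/-- Curry's fpc `Y0 = λf.ω_f ω_f`. -/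
def Y0 : Lam := lam (app K_omega K_omega)

/-- `η = λxf.f(xxf)` -/
def K_eta : Lam := lam (lam (app (var 0) (app (app (var 1) (var 1)) (var 0))))

/-- Turing's fpc `Y1 = ηη`. -/
def Y1 : Lam := app K_eta K_eta

/-- One head reduction step: contraction of the head redex. -/
inductive Head : Lam → Lam → Prop
  | beta (t u : Lam) : Head (app (lam t) u) (subst 0 u t)
  | app {s s' : Lam} (t : Lam) : (∀ u, s ≠ lam u) → Head s s' → Head (app s t) (app s' t)
  | lam {t t' : Lam} : Head t t' → Head (lam t) (lam t')

/-- Exactly `k` head reduction steps. -/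
def HeadN : Nat → Lam → Lam → Prop
  | 0, s, t => s = t
  | k + 1, s, t => ∃ u, Head s u ∧ HeadN k u t

/-- Exactly `k` β-reduction steps. -/
def StepN : Nat → Lam → Lam → Prop
  | 0, s, t => s = t
  | k + 1, s, t => ∃ u, Step s u ∧ StepN k u t

/-- `θ = λabc.bc(aabc)` -/
def K_theta : Lam :=
  lam (lam (lam (app (app (var 1) (var 0))
    (app (app (app (var 2) (var 2)) (var 1)) (var 0)))))

/-! ### Auxiliary lemmas for the Scott-sequence clock -/

lemma subst_lift (t : Lam) : ∀ k u, subst k u (lift k t) = t := by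
  induction t with
  | var n =>
    intro k u
    simp only [lift]
    split_ifs with h <;> simp only [subst] <;> split_ifs <;>
      first | rfl | (exfalso; first | omega | assumption) | (congr 1; omega)
  | app s t ihs iht => intro k u; simp [lift, subst, ihs, iht]
  | lam t ih => intro k u; simp [lift, subst, ih]

lemma lift_lift (t : Lam) : ∀ d e, e ≤ d → lift (d + 1) (lift e t) = lift e (lift d t) := by
  induction t with
  | var n =>
    intro d e h
    simp only [lift]
    split_ifs <;> simp only [lift] <;> split_ifs <;>
      first | rfl | (exfalso; first | omega | assumption) | (congr 1; omega)
  | app s t ihs iht => intro d e h; simp [lift, ihs _ _ h, iht _ _ h]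
  | lam t ih => intro d e h; simp [lift, ih (d + 1) (e + 1) (by omega)]

lemma subst_K_theta (k : Nat) (u : Lam) : subst k u K_theta = K_theta := by
  simp only [K_theta, subst]
  split_ifs <;> first | rfl | (exfalso; first | omega | assumption)


/-- `k` head steps where every intermediate term is an application (never an
abstraction), so the reduction persists under application of further arguments. -/
def HeadNA : Nat → Lam → Lam → Prop
  | 0, s, t => s = t
  | k + 1, s, t => ∃ u, (∀ v, s ≠ lam v) ∧ Head s u ∧ HeadNA k u t

lemma headNA_headN : ∀ k s t, HeadNA k s t → HeadN k s t := by
  intro k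
  induction k with
  | zero => intro s t h; exact h
  | succ k ih =>
    rintro s t ⟨u, _, h, h'⟩
    exact ⟨u, h, ih _ _ h'⟩

lemma headNA_app : ∀ (k : Nat) (s t u : Lam), HeadNA k s t → HeadNA k (app s u) (app t u) := by
  intro k
  induction k with
  | zero => intro s t u h; exact congrArg (fun x => app x u) h
  | succ k ih =>
    rintro s t u ⟨v, hn, h, h'⟩
    exact ⟨app v u, fun w => by simp, Head.app u hn h, ih _ _ _ h'⟩

lemma headNA_trans : ∀ (a b : Nat) (s t u : Lam),
    HeadNA a s t → HeadNA b t u → HeadNA (a + b) s u := by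
  intro a
  induction a with
  | zero => intro b s t u h h'; rw [Nat.zero_add]; exact h ▸ h'
  | succ a ih =>
    rintro b s t u ⟨v, hn, h, h'⟩ h''
    rw [Nat.succ_add]
    exact ⟨v, hn, h, ih _ _ _ _ h' h''⟩

lemma head_beta' {t u v : Lam} (h : subst 0 u t = v) : Head (app (lam t) u) v :=
  h ▸ Head.beta t u

lemma S_steps (N L P : Lam) :
    HeadNA 3 (app (app (app K_S N) L) P) (app (app N P) (app L P)) := by
  refine ⟨app (app (lam (lam (app (app (lift 0 (lift 0 N)) (var 0))
      (app (var 1) (var 0))))) L) P, fun v => by simp, ?_, ?_⟩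
  · refine Head.app P (fun v => by simp) (Head.app L (fun v => by simp) (head_beta' ?_))
    simp [K_S, subst]
  refine ⟨app (lam (app (app (lift 0 N) (var 0)) (app (lift 0 L) (var 0)))) P,
      fun v => by simp, ?_, ?_⟩
  · refine Head.app P (fun v => by simp) (head_beta' ?_)
    simp [subst, ← lift_lift N 0 0 (Nat.le_refl 0), subst_lift]
  refine ⟨app (app N P) (app L P), fun v => by simp, head_beta' ?_, rfl⟩
  simp [subst, subst_lift]

lemma theta_steps (M N : Lam) :
    HeadNA 3 (app (app (app K_theta K_theta) M) N)
      (app (app M N) (app (app (app K_theta K_theta) M) N)) := by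
  refine ⟨app (app (lam (lam (app (app (var 1) (var 0))
      (app (app (app K_theta K_theta) (var 1)) (var 0))))) M) N,
      fun v => by simp, ?_, ?_⟩
  · refine Head.app N (fun v => by simp) (Head.app M (fun v => by simp) (head_beta' ?_))
    decide
  refine ⟨app (lam (app (app (lift 0 M) (var 0))
      (app (app (app K_theta K_theta) (lift 0 M)) (var 0)))) N,
      fun v => by simp, ?_, ?_⟩
  · refine Head.app N (fun v => by simp) (head_beta' ?_)
    simp only [subst, subst_K_theta, lift]
    rfl
  refine ⟨_, fun v => by simp, head_beta' ?_, rfl⟩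
  simp only [subst, subst_K_theta, subst_lift]
  rfl

lemma appIter_succ (M P : Lam) : ∀ n, appIter M P (n + 1) = app (appIter M P n) P := by
  intro n
  induction n generalizing M with
  | zero => rfl
  | succ n ih => exact ih (app M P)

lemma scott_main (m : Nat) : ∀ N P : Lam,
    HeadNA (3 * m + 3)
      (app (app (appIter (app K_theta K_theta) K_S m) N) P)
      (app (app N P) (app (app (appIter (app K_theta K_theta) K_S m) N) P)) := by
  induction m with
  | zero => intro N P; exact theta_steps N P
  | succ m ih =>
    intro N P
    rw [appIter_succ]
    have h1 := headNA_app _ _ _ P (ih K_S N)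
    have h2 := S_steps N (app (app (appIter (app K_theta K_theta) K_S m) K_S) N) P
    have h3 := headNA_trans _ _ _ _ _ h1 h2
    have : 3 * m + 3 + 3 = 3 * (m + 1) + 3 := by ring
    rwa [this] at h3

/-- For every `m ≥ 0`, the term `θ θ S^m I x` head-reduces in exactly `3m+4` steps to
`x (θ θ S^m I x)`. -/
theorem scott_sequence_clock :
    ∀ m i : Nat,
      HeadN (3 * m + 4)
        (app (app (appIter (app K_theta K_theta) K_S m) K_I) (var i))
        (app (var i) (app (app (appIter (app K_theta K_theta) K_S m) K_I) (var i))) := by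
  intro m i
  have h1 := scott_main m K_I (var i)
  have h2 : HeadNA 1
      (app (app K_I (var i)) (app (app (appIter (app K_theta K_theta) K_S m) K_I) (var i)))
      (app (var i) (app (app (appIter (app K_theta K_theta) K_S m) K_I) (var i))) :=
    ⟨_, fun v => by simp,
      Head.app _ (fun v => by simp) (head_beta' (by simp [K_I, subst])), rfl⟩
  have h3 := headNA_trans _ _ _ _ _ h1 h2
  have : 3 * m + 3 + 1 = 3 * m + 4 := rfl
  rw [this] at h3
  exact headNA_headN _ _ _ h3

end Lam
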